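/- Let κ ∈ (0,1), N ≥ 2, ε > 0 with κ/2 - ε > 0. Define τ_p for p ∈ 2πℤ³ \ {0} by tanh(2τ_p) = -8π𝔞N^κ/(p² + 8π𝔞N^κ) where 𝔞 > 0 is a constant, and let σ_p = sinh(τ_p). Then on the set P_S = {p : N^{κ/2-ε} ≤ |p| ≤ N^{κ/2+ε}} one has Σ_{p ∈ P_S} σ_p² ≤ C N^{3κ/2} for a constant C depending only on 𝔞. -/

import Mathlib

open scoped Real

/-- The lattice point `2π p ∈ 2πℤ³ ⊂ ℝ³` associated to `p : ℤ³`. -/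
noncomputable def latticePoint (p : Fin 3 → ℤ) : EuclideanSpace ℝ (Fin 3) :=
  (WithLp.equiv 2 (Fin 3 → ℝ)).symm (fun i => 2 * Real.pi * (p i))

/-!
With `x = 8π𝔞N^κ` and `u = x / |p|²`, the defining relation `tanh 2τ = -u / (1 + u)` gives
`cosh 2τ = (1 + u) / √(1 + 2u)`, so `sinh² τ = (cosh 2τ - 1) / 2 ≤ min u u²`. Bounding the sum over
all of `ℤ³ ∖ {0}` (which contains the shell), group the points by their sup norm `m ≥ 1`: there are
at most `26 m²` of them and `|p| ≥ m`, so the sum is at most `26 ∑ₘ min x (x² / m²)`. Splitting at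
`m = ⌊√x⌋` bounds this by `78 x^{3/2}`, which is `C N^{3κ/2}`.
-/

open Finset Real

def supNorm (p : Fin 3 → ℤ) : ℕ := univ.sup fun i => (p i).natAbs

noncomputable def cube (b : ℕ) : Finset (Fin 3 → ℤ) :=
  Fintype.piFinset fun _ => Icc (-(b : ℤ)) b

lemma mem_cube {p : Fin 3 → ℤ} {b : ℕ} : p ∈ cube b ↔ supNorm p ≤ b := by
  simp only [cube, Fintype.mem_piFinset, mem_Icc, supNorm, Finset.sup_le_iff, mem_univ,
    true_implies]
  exact forall_congr' fun i => by omega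

lemma card_cube (b : ℕ) : #(cube b) = (2 * b + 1) ^ 3 := by
  simp only [cube, Fintype.card_piFinset, Int.card_Icc, prod_const, card_univ, Fintype.card_fin]
  congr 1
  omega

lemma supNorm_eq_zero_iff {p : Fin 3 → ℤ} : supNorm p = 0 ↔ p = 0 := by
  rw [supNorm, ← Nat.bot_eq_zero, Finset.sup_eq_bot_iff]
  simp [funext_iff]

lemma card_filter_supNorm_eq_le (s : Finset (Fin 3 → ℤ)) {m : ℕ} (hm : m ≠ 0) :
    #{p ∈ s | supNorm p = m} ≤ 26 * m ^ 2 := by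
  obtain ⟨k, rfl⟩ := Nat.exists_eq_succ_of_ne_zero hm
  have hsub : cube k ⊆ cube (k + 1) := fun p hp => mem_cube.2 (by have := mem_cube.1 hp; omega)
  calc #{p ∈ s | supNorm p = k + 1}
      ≤ #(cube (k + 1) \ cube k) :=
        card_le_card fun p hp => by
          simp only [mem_filter] at hp
          simp only [mem_sdiff, mem_cube]
          omega
    _ = (2 * (k + 1) + 1) ^ 3 - (2 * k + 1) ^ 3 := by
        rw [card_sdiff_of_subset hsub, card_cube, card_cube]
    _ ≤ 26 * (k + 1) ^ 2 := Nat.sub_le_iff_le_add.2 (by ring_nf; linarith [Nat.zero_le (k ^ 2)])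

lemma latticePoint_zero : latticePoint 0 = 0 := by
  ext i
  simp [latticePoint]

lemma supNorm_le_norm_latticePoint (p : Fin 3 → ℤ) : (supNorm p : ℝ) ≤ ‖latticePoint p‖ := by
  obtain ⟨i, -, hi⟩ := exists_mem_eq_sup univ univ_nonempty fun i => (p i).natAbs
  calc (supNorm p : ℝ) = |(p i : ℝ)| := by rw [supNorm, hi, Nat.cast_natAbs, Int.cast_abs]
    _ ≤ 2 * π * |(p i : ℝ)| := le_mul_of_one_le_left (abs_nonneg _) (by linarith [pi_gt_three])
    _ = ‖latticePoint p i‖ := by simp [latticePoint, abs_of_pos pi_pos]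
    _ ≤ ‖latticePoint p‖ := PiLp.norm_apply_le _ i

lemma sum_div_supNorm_sq_le {s : Finset (Fin 3 → ℤ)} {B : ℕ}
    (hs : ∀ p ∈ s, supNorm p ∈ Ioc 0 B) {g : ℕ → ℝ} (hg : ∀ m, 0 ≤ g m) :
    ∑ p ∈ s, g (supNorm p) / (supNorm p : ℝ) ^ 2 ≤ 26 * ∑ m ∈ Ioc 0 B, g m := by
  rw [← sum_fiberwise_of_maps_to hs, mul_sum]
  refine sum_le_sum fun m hm => ?_
  have hm0 : m ≠ 0 := (mem_Ioc.1 hm).1.ne'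
  calc ∑ p ∈ s with supNorm p = m, g (supNorm p) / (supNorm p : ℝ) ^ 2
      = #{p ∈ s | supNorm p = m} * (g m / (m : ℝ) ^ 2) := by
        rw [sum_congr rfl fun p hp => by rw [(mem_filter.1 hp).2], sum_const, nsmul_eq_mul]
    _ ≤ (26 * (m : ℝ) ^ 2) * (g m / (m : ℝ) ^ 2) := by
        gcongr
        · exact div_nonneg (hg m) (sq_nonneg _)
        · exact_mod_cast card_filter_supNorm_eq_le s hm0
    _ = 26 * g m := by field_simp

lemma sum_Ioc_min_div_sq_le {x : ℝ} (hx : 0 ≤ x) (B : ℕ) :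
    ∑ m ∈ Ioc 0 B, min x (x ^ 2 / (m : ℝ) ^ 2) ≤ 3 * x ^ (3 / 2 : ℝ) := by
  set K := ⌊√x⌋₊
  have hK : (K : ℝ) ≤ √x := Nat.floor_le (sqrt_nonneg x)
  have hK1 : √x < K + 1 := Nat.lt_floor_add_one _
  have hsplit : Ioc 0 B ⊆ Ioc 0 K ∪ Ioo K (B + 1) := fun m => by
    simp only [mem_union, mem_Ioc, mem_Ioo]; omega
  have hdisj : Disjoint (Ioc 0 K) (Ioo K (B + 1)) := disjoint_left.2 fun m => by
    simp only [mem_Ioc, mem_Ioo]; omega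
  have htail : x ^ 2 * (2 / (K + 1)) ≤ 2 * (x * √x) := by
    rw [mul_div_assoc', div_le_iff₀ (by positivity)]
    nlinarith [mul_nonneg hx (sqrt_nonneg x), sq_sqrt hx]
  calc ∑ m ∈ Ioc 0 B, min x (x ^ 2 / (m : ℝ) ^ 2)
      ≤ ∑ m ∈ Ioc 0 K ∪ Ioo K (B + 1), min x (x ^ 2 / (m : ℝ) ^ 2) :=
        sum_le_sum_of_subset_of_nonneg hsplit fun _ _ _ => by positivity
    _ ≤ ∑ m ∈ Ioc 0 K, x + ∑ m ∈ Ioo K (B + 1), x ^ 2 * ((m : ℝ) ^ 2)⁻¹ := by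
        rw [sum_union hdisj]
        gcongr with m _ m _
        · exact min_le_left _ _
        · exact (min_le_right _ _).trans_eq (div_eq_mul_inv _ _)
    _ = K * x + x ^ 2 * ∑ m ∈ Ioo K (B + 1), ((m : ℝ) ^ 2)⁻¹ := by
        rw [sum_const, Nat.card_Ioc, mul_sum, nsmul_eq_mul, Nat.sub_zero]
    _ ≤ √x * x + x ^ 2 * (2 / (K + 1)) := by
        gcongr
        exact sum_Ioo_inv_sq_le K (B + 1)
    _ ≤ 3 * (x * √x) := by linarith
    _ = 3 * x ^ (3 / 2 : ℝ) := by
        rw [sqrt_eq_rpow, ← rpow_one_add' hx (by norm_num)]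
        norm_num

lemma cosh_two_mul_sq_mul_of_tanh_two_mul {τ u : ℝ} (hu : 0 ≤ u)
    (h : tanh (2 * τ) = -u / (1 + u)) : cosh (2 * τ) ^ 2 * (1 + 2 * u) = (1 + u) ^ 2 := by
  have hsinh : sinh (2 * τ) = -u / (1 + u) * cosh (2 * τ) := by
    rw [← h, tanh_eq_sinh_div_cosh, div_mul_cancel₀ _ (cosh_pos _).ne']
  have hpyth := cosh_sq_sub_sinh_sq (2 * τ)
  rw [hsinh] at hpyth
  field_simp at hpyth
  linear_combination hpyth

lemma sinh_sq_le_min_of_tanh_two_mul {τ u : ℝ} (hu : 0 ≤ u)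
    (h : tanh (2 * τ) = -u / (1 + u)) : sinh τ ^ 2 ≤ min u (u ^ 2) := by
  have hc := cosh_two_mul_sq_mul_of_tanh_two_mul hu h
  have hsinh : sinh τ ^ 2 = (cosh (2 * τ) - 1) / 2 := by
    rw [cosh_two_mul, cosh_sq]; ring
  have hcosh_le : ∀ t, 0 ≤ t → (1 + u) ^ 2 ≤ t ^ 2 * (1 + 2 * u) → cosh (2 * τ) ≤ t :=
    fun t ht hle => le_of_pow_le_pow_left₀ two_ne_zero ht
      (le_of_mul_le_mul_right (hc.trans_le hle) (by positivity))
  have hle₁ := hcosh_le (1 + u) (by positivity) (by nlinarith)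
  have hle₂ := hcosh_le (1 + u ^ 2 / 2) (by positivity)
    (by nlinarith [pow_nonneg hu 3, pow_nonneg hu 4, pow_nonneg hu 5])
  rw [hsinh, le_min_iff]
  constructor <;> nlinarith

lemma sinh_sq_le_of_tanh_two_mul_eq {p : Fin 3 → ℤ} (hp : p ≠ 0) {x τ : ℝ} (hx : 0 ≤ x)
    (h : tanh (2 * τ) = -x / (‖latticePoint p‖ ^ 2 + x)) :
    sinh τ ^ 2 ≤ min x (x ^ 2 / (supNorm p : ℝ) ^ 2) / (supNorm p : ℝ) ^ 2 := by
  have hM : 0 < (supNorm p : ℝ) :=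
    Nat.cast_pos.2 (Nat.pos_of_ne_zero (supNorm_eq_zero_iff.not.2 hp))
  have hMa : (supNorm p : ℝ) ^ 2 ≤ ‖latticePoint p‖ ^ 2 :=
    pow_le_pow_left₀ (Nat.cast_nonneg _) (supNorm_le_norm_latticePoint p) 2
  have ha : 0 < ‖latticePoint p‖ ^ 2 := (pow_pos hM 2).trans_le hMa
  have hu : tanh (2 * τ) = -(x / ‖latticePoint p‖ ^ 2) / (1 + x / ‖latticePoint p‖ ^ 2) := by
    rw [h, one_add_div ha.ne', neg_div, neg_div, div_div_div_cancel_right₀ ha.ne']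
  calc sinh τ ^ 2
      ≤ min (x / ‖latticePoint p‖ ^ 2) ((x / ‖latticePoint p‖ ^ 2) ^ 2) :=
        sinh_sq_le_min_of_tanh_two_mul (by positivity) hu
    _ ≤ min (x / (supNorm p : ℝ) ^ 2) ((x / (supNorm p : ℝ) ^ 2) ^ 2) := by gcongr
    _ = min x (x ^ 2 / (supNorm p : ℝ) ^ 2) / (supNorm p : ℝ) ^ 2 := by
        rw [← min_div_div_right (by positivity)]
        congr 1
        ring

lemma sum_sinh_sq_le_of_tanh_two_mul_eq {s : Finset (Fin 3 → ℤ)} (hs : 0 ∉ s) {x : ℝ}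
    (hx : 0 ≤ x) {τ : (Fin 3 → ℤ) → ℝ} (hτ : ∀ p ∈ s, tanh (2 * τ p) = -x / (‖latticePoint p‖ ^ 2 + x)) :
    ∑ p ∈ s, sinh (τ p) ^ 2 ≤ 78 * x ^ (3 / 2 : ℝ) := by
  have hs' : ∀ p ∈ s, supNorm p ∈ Ioc 0 (s.sup supNorm) := fun p hp =>
    mem_Ioc.2 ⟨Nat.pos_of_ne_zero (supNorm_eq_zero_iff.not.2 (ne_of_mem_of_not_mem hp hs)),
      le_sup hp⟩
  calc ∑ p ∈ s, sinh (τ p) ^ 2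
      ≤ ∑ p ∈ s, min x (x ^ 2 / (supNorm p : ℝ) ^ 2) / (supNorm p : ℝ) ^ 2 :=
        sum_le_sum fun p hp =>
          sinh_sq_le_of_tanh_two_mul_eq (ne_of_mem_of_not_mem hp hs) hx (hτ p hp)
    _ ≤ 26 * ∑ m ∈ Ioc 0 (s.sup supNorm), min x (x ^ 2 / (m : ℝ) ^ 2) :=
        sum_div_supNorm_sq_le (g := fun m => min x (x ^ 2 / (m : ℝ) ^ 2)) hs' fun _ => by
          positivity
    _ ≤ 26 * (3 * x ^ (3 / 2 : ℝ)) := by gcongr; exact sum_Ioc_min_div_sq_le hx _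
    _ = 78 * x ^ (3 / 2 : ℝ) := by ring

/-- With `τ_p` defined by `tanh(2τ_p) = -8π𝔞N^κ/(p² + 8π𝔞N^κ)` and `σ_p = sinh(τ_p)`,
one has `Σ_{p ∈ P_S} σ_p² ≤ C N^{3κ/2}` on the shell
`P_S = {p : N^{κ/2-ε} ≤ |p| ≤ N^{κ/2+ε}}`, with `C` depending only on `𝔞`. -/
theorem stmt2 (𝔞 : ℝ) (h𝔞 : 0 < 𝔞) :
    ∃ C > 0, ∀ (κ N ε : ℝ) (τ : (Fin 3 → ℤ) → ℝ),
      0 < κ → κ < 1 → 2 ≤ N → 0 < ε → ε < κ / 2 →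
      (∀ p : Fin 3 → ℤ, p ≠ 0 →
        Real.tanh (2 * τ p) =
          -(8 * Real.pi * 𝔞 * N ^ κ) / (‖latticePoint p‖ ^ 2 + 8 * Real.pi * 𝔞 * N ^ κ)) →
      ∑' p : {p : Fin 3 → ℤ //
          N ^ (κ / 2 - ε) ≤ ‖latticePoint p‖ ∧ ‖latticePoint p‖ ≤ N ^ (κ / 2 + ε)},
        (Real.sinh (τ p.1)) ^ 2 ≤ C * N ^ (3 * κ / 2) := by
  refine ⟨78 * (8 * π * 𝔞) ^ (3 / 2 : ℝ), by positivity, ?_⟩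
  intro κ N ε τ _ _ hN _ _ hτ
  have hN0 : 0 < N := by linarith
  refine Real.tsum_le_of_sum_le (fun _ => sq_nonneg _) fun F => ?_
  have hshell : (0 : Fin 3 → ℤ) ∉ F.map (Function.Embedding.subtype _) := by
    simp only [mem_map, Function.Embedding.coe_subtype, not_exists, not_and]
    intro q _ hq0
    have := q.2.1
    rw [hq0, latticePoint_zero, norm_zero] at this
    exact (rpow_pos_of_pos hN0 _).not_ge this
  calc ∑ q ∈ F, sinh (τ q.1) ^ 2
      = ∑ p ∈ F.map (Function.Embedding.subtype _), sinh (τ p) ^ 2 := by rw [sum_map]; rfl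
    _ ≤ 78 * (8 * π * 𝔞 * N ^ κ) ^ (3 / 2 : ℝ) :=
        sum_sinh_sq_le_of_tanh_two_mul_eq hshell (by positivity) fun p hp =>
          hτ p (ne_of_mem_of_not_mem hp hshell)
    _ = 78 * (8 * π * 𝔞) ^ (3 / 2 : ℝ) * N ^ (3 * κ / 2) := by
        rw [mul_rpow (by positivity) (by positivity), ← rpow_mul hN0.le, ← mul_assoc,
          show κ * (3 / 2) = 3 * κ / 2 by ring]
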